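/- Every λ_CL-term reduces in finitely many steps to a term in parallel form, using only the permutation reductions. -/

import Mathlib

/-- Propositional formulas: atoms, ⊥, implication, conjunction. -/
inductive Formula : Type where
  | atom : Nat → Formula
  | bot  : Formula
  | imp  : Formula → Formula → Formula
  | conj : Formula → Formula → Formula
deriving DecidableEq

/-- A formula is prime if it is not a conjunction. -/
def Formula.IsPrime : Formula → Prop
  | .conj _ _ => False
  | _ => True

/-- Atomic formulas (atoms and ⊥). -/
def Formula.IsAtomic : Formula → Prop
  | .atom _ => True
  | .bot => True
  | _ => False

/-- Subformula relation. -/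
inductive Subformula : Formula → Formula → Prop where
  | refl (A : Formula) : Subformula A A
  | impL : Subformula A B → Subformula A (Formula.imp B C)
  | impR : Subformula A C → Subformula A (Formula.imp B C)
  | conjL : Subformula A B → Subformula A (Formula.conj B C)
  | conjR : Subformula A C → Subformula A (Formula.conj B C)

/-- Proper subformula: subformula and not equal. -/
def ProperSub (A B : Formula) : Prop := Subformula A B ∧ A ≠ B

/-- B is a strong subformula of A: a proper subformula of some prime
proper subformula of A. -/
def StrongSub (B A : Formula) : Prop :=
  ∃ P, Formula.IsPrime P ∧ ProperSub P A ∧ ProperSub B P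

/-- `ConjList A l` : A is the conjunction of the (nonempty) list of formulas l. -/
inductive ConjList : Formula → List Formula → Prop where
  | single (A : Formula) : ConjList A [A]
  | conj : ConjList A l → ConjList B m → ConjList (Formula.conj A B) (l ++ m)

/-- P is a prime factor of A: A is a conjunction of prime formulas among which P. -/
def PrimeFactor (P A : Formula) : Prop :=
  ∃ l, ConjList A l ∧ (∀ Q ∈ l, Formula.IsPrime Q) ∧ P ∈ l

/-- Number of symbols of a formula. -/
def Formula.size : Formula → Nat
  | .atom _ => 1
  | .bot => 1
  | .imp A B => A.size + B.size + 1
  | .conj A B => A.size + B.size + 1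

/-- The canonical list of prime factors of a formula. -/
def primeFactors : Formula → List Formula
  | .conj A B => primeFactors A ++ primeFactors B
  | A => [A]
/-- λ_CL terms (de Bruijn): simply typed λ-terms plus the parallel operators
`parC A u v` (u ∥ₐ v with communication kind A, binding channel variable 0,
of type ¬A in u and A in v) and `par u v` (u ∥ v). -/
inductive TermCL : Type where
  | var : Nat → TermCL
  | lam : Formula → TermCL → TermCL
  | app : TermCL → TermCL → TermCL
  | pair : TermCL → TermCL → TermCL
  | proj : Bool → TermCL → TermCL
  | efq : Formula → TermCL → TermCL
  | parC : Formula → TermCL → TermCL → TermCL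
  | par : TermCL → TermCL → TermCL
deriving DecidableEq

def liftF (f : Nat → Nat) : Nat → Nat
  | 0 => 0
  | n+1 => f n + 1

def TermCL.rename (f : Nat → Nat) : TermCL → TermCL
  | .var n => .var (f n)
  | .lam A t => .lam A (t.rename (liftF f))
  | .app t u => .app (t.rename f) (u.rename f)
  | .pair t u => .pair (t.rename f) (u.rename f)
  | .proj b t => .proj b (t.rename f)
  | .efq A t => .efq A (t.rename f)
  | .parC A u v => .parC A (u.rename (liftF f)) (v.rename (liftF f))
  | .par u v => .par (u.rename f) (v.rename f)

/-- Shift all free variables up by one. -/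
def liftT : TermCL → TermCL := TermCL.rename Nat.succ
/-- Shift all free variables except 0 up by one. -/
def liftU1 : TermCL → TermCL := TermCL.rename (liftF Nat.succ)
/-- Swap the variables 0 and 1. -/
def swap01 : TermCL → TermCL :=
  TermCL.rename (fun n => match n with | 0 => 1 | 1 => 0 | m => m)

/-- Substitution of `s` for variable `k` (variables above `k` shift down). -/
def TermCL.subst (k : Nat) (s : TermCL) : TermCL → TermCL
  | .var n => if n = k then s else if k < n then .var (n-1) else .var n
  | .lam A t => .lam A (TermCL.subst (k+1) (s.rename Nat.succ) t)
  | .app t u => .app (TermCL.subst k s t) (TermCL.subst k s u)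
  | .pair t u => .pair (TermCL.subst k s t) (TermCL.subst k s u)
  | .proj b t => .proj b (TermCL.subst k s t)
  | .efq A t => .efq A (TermCL.subst k s t)
  | .parC A u v => .parC A (TermCL.subst (k+1) (s.rename Nat.succ) u)
      (TermCL.subst (k+1) (s.rename Nat.succ) v)
  | .par u v => .par (TermCL.subst k s u) (TermCL.subst k s v)

def liftσ (σ : Nat → TermCL) : Nat → TermCL
  | 0 => .var 0
  | n+1 => (σ n).rename Nat.succ

/-- Simultaneous substitution. -/
def TermCL.msubst (σ : Nat → TermCL) : TermCL → TermCL
  | .var n => σ n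
  | .lam A t => .lam A (TermCL.msubst (liftσ σ) t)
  | .app t u => .app (TermCL.msubst σ t) (TermCL.msubst σ u)
  | .pair t u => .pair (TermCL.msubst σ t) (TermCL.msubst σ u)
  | .proj b t => .proj b (TermCL.msubst σ t)
  | .efq A t => .efq A (TermCL.msubst σ t)
  | .parC A u v => .parC A (TermCL.msubst (liftσ σ) u) (TermCL.msubst (liftσ σ) v)
  | .par u v => .par (TermCL.msubst σ u) (TermCL.msubst σ v)

/-- `freeInB n t = true` iff variable `n` occurs free in `t`. -/
def freeInB (n : Nat) : TermCL → Bool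
  | .var m => m == n
  | .lam _ t => freeInB (n+1) t
  | .app t u => freeInB n t || freeInB n u
  | .pair t u => freeInB n t || freeInB n u
  | .proj _ t => freeInB n t
  | .efq _ t => freeInB n t
  | .parC _ u v => freeInB (n+1) u || freeInB (n+1) v
  | .par u v => freeInB n u || freeInB n v

/-- Typing for λ_CL: intuitionistic rules, the excluded-middle rule (parC)
and contraction (par). -/
inductive TypingCL : List Formula → TermCL → Formula → Prop where
  | var : Γ[n]? = some A → TypingCL Γ (.var n) A
  | lam : TypingCL (A::Γ) t B → TypingCL Γ (.lam A t) (.imp A B)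
  | app : TypingCL Γ t (.imp A B) → TypingCL Γ u A → TypingCL Γ (.app t u) B
  | pair : TypingCL Γ t A → TypingCL Γ u B → TypingCL Γ (.pair t u) (.conj A B)
  | projL : TypingCL Γ t (.conj A B) → TypingCL Γ (.proj false t) A
  | projR : TypingCL Γ t (.conj A B) → TypingCL Γ (.proj true t) B
  | efq : P.IsAtomic → P ≠ .bot → TypingCL Γ t .bot → TypingCL Γ (.efq P t) P
  | parC : TypingCL (.imp A .bot :: Γ) u C → TypingCL (A :: Γ) v C →
      TypingCL Γ (.parC A u v) C
  | par : TypingCL Γ u A → TypingCL Γ v A → TypingCL Γ (.par u v) A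

/-- Terms without parallel operators, i.e. simply typed λ-terms. -/
def NoPar : TermCL → Prop
  | .var _ => True
  | .lam _ t => NoPar t
  | .app t u => NoPar t ∧ NoPar u
  | .pair t u => NoPar t ∧ NoPar u
  | .proj _ t => NoPar t
  | .efq _ t => NoPar t
  | .parC _ _ _ => False
  | .par _ _ => False

/-- Simple parallel terms: parallel compositions (by ∥) of simply typed λ-terms. -/
inductive SimpleParallel : TermCL → Prop where
  | base : NoPar t → SimpleParallel t
  | par : SimpleParallel u → SimpleParallel v → SimpleParallel (.par u v)

/-- Parallel forms: parallel compositions (by ∥ₐ and ∥) of simply typed λ-terms. -/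
inductive ParallelForm : TermCL → Prop where
  | base : NoPar t → ParallelForm t
  | parC : ParallelForm u → ParallelForm v → ParallelForm (.parC A u v)
  | par : ParallelForm u → ParallelForm v → ParallelForm (.par u v)

/-- One-hole contexts. -/
inductive Ctx : Type where
  | hole : Ctx
  | lam : Formula → Ctx → Ctx
  | appL : Ctx → TermCL → Ctx
  | appR : TermCL → Ctx → Ctx
  | pairL : Ctx → TermCL → Ctx
  | pairR : TermCL → Ctx → Ctx
  | proj : Bool → Ctx → Ctx
  | efq : Formula → Ctx → Ctx
  | parCL : Formula → Ctx → TermCL → Ctx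
  | parCR : Formula → TermCL → Ctx → Ctx
  | parL : Ctx → TermCL → Ctx
  | parR : TermCL → Ctx → Ctx

def Ctx.fill : Ctx → TermCL → TermCL
  | .hole, t => t
  | .lam A c, t => .lam A (c.fill t)
  | .appL c u, t => .app (c.fill t) u
  | .appR u c, t => .app u (c.fill t)
  | .pairL c u, t => .pair (c.fill t) u
  | .pairR u c, t => .pair u (c.fill t)
  | .proj b c, t => .proj b (c.fill t)
  | .efq A c, t => .efq A (c.fill t)
  | .parCL A c u, t => .parC A (c.fill t) u
  | .parCR A u c, t => .parC A u (c.fill t)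
  | .parL c u, t => .par (c.fill t) u
  | .parR u c, t => .par u (c.fill t)

/-- Types of the binders crossed by the hole, innermost first. -/
def Ctx.ext : Ctx → List Formula
  | .hole => []
  | .lam A c => c.ext ++ [A]
  | .appL c _ => c.ext
  | .appR _ c => c.ext
  | .pairL c _ => c.ext
  | .pairR _ c => c.ext
  | .proj _ c => c.ext
  | .efq _ c => c.ext
  | .parCL A c _ => c.ext ++ [Formula.imp A .bot]
  | .parCR A _ c => c.ext ++ [A]
  | .parL c _ => c.ext
  | .parR _ c => c.ext

/-- Number of binders above the hole. -/
def Ctx.depth (c : Ctx) : Nat := c.ext.length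

def Ctx.rename (f : Nat → Nat) : Ctx → Ctx
  | .hole => .hole
  | .lam A c => .lam A (c.rename (liftF f))
  | .appL c u => .appL (c.rename f) (u.rename f)
  | .appR u c => .appR (u.rename f) (c.rename f)
  | .pairL c u => .pairL (c.rename f) (u.rename f)
  | .pairR u c => .pairR (u.rename f) (c.rename f)
  | .proj b c => .proj b (c.rename f)
  | .efq A c => .efq A (c.rename f)
  | .parCL A c u => .parCL A (c.rename (liftF f)) (u.rename (liftF f))
  | .parCR A u c => .parCR A (u.rename (liftF f)) (c.rename (liftF f))
  | .parL c u => .parL (c.rename f) (u.rename f)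
  | .parR u c => .parR (u.rename f) (c.rename f)

/-- The variable `a` does not occur (free) to the right of the hole. -/
def NoVarRight (a : Nat) : Ctx → Prop
  | .hole => True
  | .lam _ c => NoVarRight (a+1) c
  | .appL c t => NoVarRight a c ∧ freeInB a t = false
  | .appR _ c => NoVarRight a c
  | .pairL c t => NoVarRight a c ∧ freeInB a t = false
  | .pairR _ c => NoVarRight a c
  | .proj _ c => NoVarRight a c
  | .efq _ c => NoVarRight a c
  | .parCL _ c t => NoVarRight (a+1) c ∧ freeInB (a+1) t = false
  | .parCR _ _ c => NoVarRight (a+1) c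
  | .parL c t => NoVarRight a c ∧ freeInB a t = false
  | .parR _ c => NoVarRight a c

open Classical in
/-- Communication complexity: total number of symbols of the prime factors of
the communication kind `B` that are neither proper subformulas of the term's
type `A` nor strong subformulas of the types `fvs` of its free variables. -/
noncomputable def commComplexity (fvs : List Formula) (A B : Formula) : Nat :=
  ((primeFactors B).filter fun P =>
      decide (¬ (ProperSub P A ∨ ∃ Ai ∈ fvs, StrongSub P Ai))).foldr
    (fun P n => P.size + n) 0

/-- The types of the free variables of `t` in context `Γ`. -/
def freeTypes (Γ : List Formula) (t : TermCL) : List Formula :=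
  (List.range Γ.length).filterMap fun n => if freeInB n t then Γ[n]? else none

/-- Iterated pairs ⟨t₁,...,tₙ⟩. -/
def tupleTerm : List TermCL → TermCL
  | [] => .var 0
  | [t] => t
  | t :: l => .pair t (tupleTerm l)

/-- Iterated conjunctions Y₁ ∧ (Y₂ ∧ ... ∧ Yₙ). -/
def tupleType : List Formula → Formula
  | [] => .bot
  | [A] => A
  | A :: l => .conj A (tupleType l)

/-- The i-th projection of a tuple of length `len`. -/
def projSel (i len : Nat) (t : TermCL) : TermCL :=
  if i + 1 = len then (TermCL.proj true)^[i] t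
  else .proj false ((TermCL.proj true)^[i] t)

/-- The multiple substitution `u^{b/ȳ}` (with `b` the channel variable 0):
variables in `ys` (the free variables of `u` bound in the context, all < k)
are replaced by the corresponding projections of `b`, the remaining free
variables (≥ k+1, the variable k being the channel ā, absent) are readdressed. -/
def crossσ (k : Nat) (ys : List Nat) : Nat → TermCL := fun n =>
  if n < k then projSel (List.idxOf n ys) ys.length (.var 0)
  else .var (n - k)

/-- Intuitionistic (β/projection) reduction on λ_CL terms. -/
inductive RedI : TermCL → TermCL → Prop where
  | beta : RedI (.app (.lam A t) u) (TermCL.subst 0 u t)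
  | projL : RedI (.proj false (.pair t u)) t
  | projR : RedI (.proj true (.pair t u)) u
  | lam : RedI t t' → RedI (.lam A t) (.lam A t')
  | appL : RedI t t' → RedI (.app t u) (.app t' u)
  | appR : RedI u u' → RedI (.app t u) (.app t u')
  | pairL : RedI t t' → RedI (.pair t u) (.pair t' u)
  | pairR : RedI u u' → RedI (.pair t u) (.pair t u')
  | proj : RedI t t' → RedI (.proj b t) (.proj b t')
  | efq : RedI t t' → RedI (.efq A t) (.efq A t')
  | parCL : RedI u u' → RedI (.parC A u v) (.parC A u' v)
  | parCR : RedI v v' → RedI (.parC A u v) (.parC A u v')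
  | parL : RedI u u' → RedI (.par u v) (.par u' v)
  | parR : RedI v v' → RedI (.par u v) (.par u v')

/-- Normality with respect to intuitionistic reductions. -/
def IntuNormal (t : TermCL) : Prop := ∀ u, ¬ RedI t u
/-- The permutation reductions of λ_CL: pushing the term constructors inside
the parallel operators, closed under all term constructors. -/
inductive PermRed : TermCL → TermCL → Prop where
  | appParC : PermRed (.app w (.parC X u v))
      (.parC X (.app (liftT w) u) (.app (liftT w) v))
  | parCApp : PermRed (.app (.parC X u v) w)
      (.parC X (.app u (liftT w)) (.app v (liftT w)))
  | parCProj : PermRed (.proj b (.parC X u v)) (.parC X (.proj b u) (.proj b v))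
  | parCEfq : PermRed (.efq P (.parC X u v)) (.parC X (.efq P u) (.efq P v))
  | lamParC : PermRed (.lam Y (.parC X u v))
      (.parC X (.lam Y (swap01 u)) (.lam Y (swap01 v)))
  | pairParCL : PermRed (.pair (.parC X u v) w)
      (.parC X (.pair u (liftT w)) (.pair v (liftT w)))
  | pairParCR : PermRed (.pair w (.parC X u v))
      (.parC X (.pair (liftT w) u) (.pair (liftT w) v))
  | appPar : PermRed (.app w (.par u v)) (.par (.app w u) (.app w v))
  | parApp : PermRed (.app (.par u v) w) (.par (.app u w) (.app v w))
  | parProj : PermRed (.proj b (.par u v)) (.par (.proj b u) (.proj b v))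
  | parEfq : PermRed (.efq P (.par u v)) (.par (.efq P u) (.efq P v))
  | lamPar : PermRed (.lam Y (.par u v)) (.par (.lam Y u) (.lam Y v))
  | pairParL : PermRed (.pair (.par u v) w) (.par (.pair u w) (.pair v w))
  | pairParR : PermRed (.pair w (.par u v)) (.par (.pair w u) (.pair w v))
  | lam : PermRed t t' → PermRed (.lam A t) (.lam A t')
  | appL : PermRed t t' → PermRed (.app t u) (.app t' u)
  | appR : PermRed u u' → PermRed (.app t u) (.app t u')
  | pairL : PermRed t t' → PermRed (.pair t u) (.pair t' u)
  | pairR : PermRed u u' → PermRed (.pair t u) (.pair t u')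
  | proj : PermRed t t' → PermRed (.proj b t) (.proj b t')
  | efq : PermRed t t' → PermRed (.efq A t) (.efq A t')
  | parCL : PermRed u u' → PermRed (.parC A u v) (.parC A u' v)
  | parCR : PermRed v v' → PermRed (.parC A u v) (.parC A u v')
  | parL : PermRed u u' → PermRed (.par u v) (.par u' v)
  | parR : PermRed v v' → PermRed (.par u v) (.par u v')

/-! A term is brought into parallel form bottom-up: once the immediate subterms of a constructor
are parallel forms, the permutation reductions push the constructor through the parallel operators
at the top of each subterm, recursing along their structure until it meets parallel-free terms.
Pushing a binary constructor is a double induction: first along the left argument, then, once the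
left argument is parallel-free, along the right one. -/

open Relation

def ReducesToParallelForm (t : TermCL) : Prop :=
  ∃ t', ReflTransGen PermRed t t' ∧ ParallelForm t'

namespace TermCL

theorem liftF_comp (f g : ℕ → ℕ) : liftF (g ∘ f) = liftF g ∘ liftF f := by
  funext n; cases n <;> rfl

theorem liftF_id : liftF id = id := by
  funext n; cases n <;> rfl

theorem rename_rename (t : TermCL) (f g : ℕ → ℕ) :
    (t.rename f).rename g = t.rename (g ∘ f) := by
  induction t generalizing f g <;> simp_all [rename, liftF_comp]

theorem rename_id (t : TermCL) : t.rename id = t := by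
  induction t <;> simp_all [rename, liftF_id]

end TermCL

theorem NoPar.rename {t : TermCL} (h : NoPar t) (f : ℕ → ℕ) : NoPar (t.rename f) := by
  induction t generalizing f <;> simp_all [TermCL.rename, NoPar]

theorem ParallelForm.rename {t : TermCL} (h : ParallelForm t) (f : ℕ → ℕ) :
    ParallelForm (t.rename f) := by
  induction h generalizing f with
  | base h => exact .base (h.rename f)
  | parC _ _ ih₁ ih₂ => exact .parC (ih₁ _) (ih₂ _)
  | par _ _ ih₁ ih₂ => exact .par (ih₁ _) (ih₂ _)

namespace ReducesToParallelForm

theorem of_parallelForm {t : TermCL} (h : ParallelForm t) : ReducesToParallelForm t :=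
  ⟨t, .refl, h⟩

theorem of_noPar {t : TermCL} (h : NoPar t) : ReducesToParallelForm t :=
  of_parallelForm (.base h)

theorem of_permRed {t t' : TermCL} (hr : PermRed t t') (h : ReducesToParallelForm t') :
    ReducesToParallelForm t :=
  let ⟨t'', hr', hpf⟩ := h
  ⟨t'', .head hr hr', hpf⟩

theorem map {f : TermCL → TermCL} {t : TermCL} (ht : ReducesToParallelForm t)
    (hf : ∀ a b, PermRed a b → PermRed (f a) (f b))
    (hpush : ∀ t', ParallelForm t' → ReducesToParallelForm (f t')) :
    ReducesToParallelForm (f t) :=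
  let ⟨t', rt, pt⟩ := ht
  let ⟨v, rv, pv⟩ := hpush t' pt
  ⟨v, (rt.lift f hf).trans rv, pv⟩

theorem map₂ {f : TermCL → TermCL → TermCL} {t u : TermCL} (ht : ReducesToParallelForm t)
    (hu : ReducesToParallelForm u) (hf₁ : ∀ a a' b, PermRed a a' → PermRed (f a b) (f a' b))
    (hf₂ : ∀ a b b', PermRed b b' → PermRed (f a b) (f a b'))
    (hpush : ∀ t' u', ParallelForm t' → ParallelForm u' → ReducesToParallelForm (f t' u')) :
    ReducesToParallelForm (f t u) :=
  ht.map (f := (f · u)) (fun a a' => hf₁ a a' u) fun t' pt =>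
    hu.map (f := f t') (hf₂ t') fun u' pu => hpush t' u' pt pu

theorem parC {A : Formula} {u v : TermCL} (hu : ReducesToParallelForm u)
    (hv : ReducesToParallelForm v) : ReducesToParallelForm (.parC A u v) :=
  hu.map₂ (f := .parC A) hv (fun _ _ _ => .parCL) (fun _ _ _ => .parCR)
    fun _ _ pu pv => of_parallelForm (.parC pu pv)

theorem par {u v : TermCL} (hu : ReducesToParallelForm u) (hv : ReducesToParallelForm v) :
    ReducesToParallelForm (.par u v) :=
  hu.map₂ (f := .par) hv (fun _ _ _ => .parL) (fun _ _ _ => .parR)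
    fun _ _ pu pv => of_parallelForm (.par pu pv)

end ReducesToParallelForm

namespace ParallelForm

/-- `F i` is a term constructor, with its other arguments encoded in the index `i`; crossing the
binder of `∥ₐ` changes those arguments to `lift i` (they are shifted, or renamed). -/
theorem reducesToParallelForm_push {ι : Type} (F : ι → TermCL → TermCL) (lift : ι → ι)
    (hbase : ∀ i t, NoPar t → ReducesToParallelForm (F i t))
    (hpar : ∀ i u v, PermRed (F i (.par u v)) (.par (F i u) (F i v)))
    (hparC : ∀ i X u v, PermRed (F i (.parC X u v)) (.parC X (F (lift i) u) (F (lift i) v)))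
    {t : TermCL} (ht : ParallelForm t) (i : ι) : ReducesToParallelForm (F i t) := by
  induction ht generalizing i with
  | base h => exact hbase i _ h
  | parC _ _ ih₁ ih₂ =>
    exact .of_permRed (hparC i _ _ _) ((ih₁ (lift i)).parC (ih₂ (lift i)))
  | par _ _ ih₁ ih₂ => exact .of_permRed (hpar i _ _) ((ih₁ i).par (ih₂ i))

theorem reducesToParallelForm_proj {t : TermCL} (h : ParallelForm t) (b : Bool) :
    ReducesToParallelForm (.proj b t) :=
  reducesToParallelForm_push (fun (_ : Unit) => TermCL.proj b) id
    (fun _ _ h => .of_noPar h) (fun _ _ _ => .parProj) (fun _ _ _ _ => .parCProj) h ()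

theorem reducesToParallelForm_efq {t : TermCL} (h : ParallelForm t) (A : Formula) :
    ReducesToParallelForm (.efq A t) :=
  reducesToParallelForm_push (fun (_ : Unit) => TermCL.efq A) id
    (fun _ _ h => .of_noPar h) (fun _ _ _ => .parEfq) (fun _ _ _ _ => .parCEfq) h ()

/-- The body is pushed along with a pending renaming, which absorbs the swaps of the two innermost
variables produced by `lamParC`. -/
theorem reducesToParallelForm_lam {t : TermCL} (h : ParallelForm t) (A : Formula) :
    ReducesToParallelForm (.lam A t) := by
  obtain ⟨s, hs⟩ : ∃ s, swap01 = TermCL.rename s := ⟨_, rfl⟩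
  have := reducesToParallelForm_push (fun f t => .lam A (t.rename f)) (s ∘ liftF ·)
    (fun _ _ ht => .of_noPar (ht.rename _)) (fun _ _ _ => .lamPar)
    (fun _ _ _ _ => by
      rw [← TermCL.rename_rename, ← TermCL.rename_rename, ← hs]
      exact .lamParC)
    h id
  rwa [TermCL.rename_id] at this

theorem reducesToParallelForm_app_of_noPar {w u : TermCL} (hw : NoPar w) (hu : ParallelForm u) :
    ReducesToParallelForm (.app w u) :=
  reducesToParallelForm_push (fun (w : {w // NoPar w}) => .app w.1)
    (fun w => ⟨liftT w.1, w.2.rename _⟩) (fun w _ ht => .of_noPar ⟨w.2, ht⟩)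
    (fun _ _ _ => .appPar) (fun _ _ _ _ => .appParC) hu ⟨w, hw⟩

theorem reducesToParallelForm_app {t u : TermCL} (ht : ParallelForm t) (hu : ParallelForm u) :
    ReducesToParallelForm (.app t u) :=
  reducesToParallelForm_push (fun (u : {u // ParallelForm u}) t => .app t u.1)
    (fun u => ⟨liftT u.1, u.2.rename _⟩)
    (fun u _ ht => reducesToParallelForm_app_of_noPar ht u.2)
    (fun _ _ _ => .parApp) (fun _ _ _ _ => .parCApp) ht ⟨u, hu⟩

theorem reducesToParallelForm_pair_of_noPar {w u : TermCL} (hw : NoPar w) (hu : ParallelForm u) :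
    ReducesToParallelForm (.pair w u) :=
  reducesToParallelForm_push (fun (w : {w // NoPar w}) => .pair w.1)
    (fun w => ⟨liftT w.1, w.2.rename _⟩) (fun w _ ht => .of_noPar ⟨w.2, ht⟩)
    (fun _ _ _ => .pairParR) (fun _ _ _ _ => .pairParCR) hu ⟨w, hw⟩

theorem reducesToParallelForm_pair {t u : TermCL} (ht : ParallelForm t) (hu : ParallelForm u) :
    ReducesToParallelForm (.pair t u) :=
  reducesToParallelForm_push (fun (u : {u // ParallelForm u}) t => .pair t u.1)
    (fun u => ⟨liftT u.1, u.2.rename _⟩)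
    (fun u _ ht => reducesToParallelForm_pair_of_noPar ht u.2)
    (fun _ _ _ => .pairParL) (fun _ _ _ _ => .pairParCL) ht ⟨u, hu⟩

end ParallelForm

/-- every λ_CL-term reduces in finitely many steps to a term in
parallel form using only the permutation reductions. -/
theorem reduces_to_parallel_form (t : TermCL) :
    ∃ t', Relation.ReflTransGen PermRed t t' ∧ ParallelForm t' := by
  show ReducesToParallelForm t
  induction t with
  | var _ => exact .of_noPar trivial
  | lam A _ ih =>
    exact ih.map (f := .lam A) (fun _ _ => .lam) fun _ h => h.reducesToParallelForm_lam A
  | app _ _ iht ihu =>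
    exact iht.map₂ (f := .app) ihu (fun _ _ _ => .appL) (fun _ _ _ => .appR)
      fun _ _ => ParallelForm.reducesToParallelForm_app
  | pair _ _ iht ihu =>
    exact iht.map₂ (f := .pair) ihu (fun _ _ _ => .pairL) (fun _ _ _ => .pairR)
      fun _ _ => ParallelForm.reducesToParallelForm_pair
  | proj b _ ih =>
    exact ih.map (f := .proj b) (fun _ _ => .proj) fun _ h => h.reducesToParallelForm_proj b
  | efq A _ ih =>
    exact ih.map (f := .efq A) (fun _ _ => .efq) fun _ h => h.reducesToParallelForm_efq A
  | parC _ _ _ ihu ihv => exact ihu.parC ihv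
  | par _ _ ihu ihv => exact ihu.par ihv
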